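/- (Oracle DRIV loss decomposition; projections on arbitrary model spaces.) Assume β0(X) ≥ β_min almost surely for some constant β_min > 0, let θ_pre be any bounded measurable function of X, and set Y_DR = θ_pre(X) + (Y − q0(X) − θ_pre(X)·(T − p0(X)))·(Z − r0(X)) / β0(X). Then E[Y_DR | X] = θ0(X) almost surely, and consequently for every bounded measurable function θ of X, E[(Y_DR − θ(X))²] = E[(Y_DR − θ0(X))²] + E[(θ0(X) − θ(X))²]; hence minimizing the oracle DRIV loss over any class of functions of X is equivalent to minimizing E[(θ0(X) − θ(X))²], i.e., to projecting θ0 onto that class. -/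

import Mathlib

/-!
With `ε = Y - θ₀ T - f₀` and `W = Z - r₀`, the residual `Y - q₀ - θ_pre (T - p₀)` equals
`ε + (θ₀ - θ_pre) (T - p₀) + (θ₀ p₀ + f₀ - q₀)`, whose coefficients are functions of `X`.
Conditionally on `X`, the term `ε W` vanishes by the moment condition (through the tower
`σ(X) ⊆ σ(Z, X)`), the term `(θ₀ p₀ + f₀ - q₀) W` vanishes because `E[W | X] = 0`, and
`(θ₀ - θ_pre) (T - p₀) W` contributes `(θ₀ - θ_pre) β₀`; dividing by `β₀` and adding `θ_pre`
leaves `θ₀`. The loss decomposition is then Pythagoras: `Y_DR - θ₀` is orthogonal to every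
square-integrable function of `X`.
-/

open MeasureTheory
open scoped ENNReal

section

variable {Ω : Type*} {m m' m0 : MeasurableSpace Ω} {μ : Measure Ω}

lemma memLp_top_of_abs_le {f : Ω → ℝ} (hf : AEStronglyMeasurable f μ)
    (h : ∃ C, ∀ ω, |f ω| ≤ C) : MemLp f ∞ μ :=
  let ⟨C, hC⟩ := h
  memLp_top_of_bound hf C (ae_of_all _ hC)

lemma memLp_top_comp_of_abs_le {𝓧 : Type*} [MeasurableSpace 𝓧] {f : 𝓧 → ℝ} (hf : Measurable f)
    (h : ∃ C, ∀ x, |f x| ≤ C) {X : Ω → 𝓧} (hX : Measurable X) :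
    MemLp (fun ω => f (X ω)) ∞ μ :=
  memLp_top_of_abs_le (hf.comp hX).aestronglyMeasurable (h.imp fun _ hC ω => hC (X ω))

lemma memLp_top_inv_of_le {f : Ω → ℝ} (hf : AEStronglyMeasurable f μ) {c : ℝ} (hc : 0 < c)
    (h : ∀ᵐ ω ∂μ, c ≤ f ω) : MemLp f⁻¹ ∞ μ :=
  memLp_top_of_bound hf.aemeasurable.inv.aestronglyMeasurable c⁻¹ <| h.mono fun ω hω => by
    rw [Pi.inv_apply, norm_inv, Real.norm_of_nonneg (hc.le.trans hω)]
    exact inv_anti₀ hc hω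

lemma condExp_mul_eq_zero_of_condExp_eq_zero [IsFiniteMeasure μ] (hmm' : m ≤ m') (hm' : m' ≤ m0)
    {g f : Ω → ℝ} (hg : StronglyMeasurable[m'] g) (hgf : Integrable (g * f) μ)
    (hf : Integrable f μ) (h : μ[f | m'] =ᵐ[μ] 0) : μ[g * f | m] =ᵐ[μ] 0 := by
  have hgf' : μ[g * f | m'] =ᵐ[μ] 0 :=
    (condExp_mul_of_stronglyMeasurable_left hg hgf hf).trans <| h.mono fun ω hω => by
      simp [hω]
  calc μ[g * f | m] =ᵐ[μ] μ[μ[g * f | m'] | m] := (condExp_condExp_of_le hmm' hm').symm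
    _ =ᵐ[μ] μ[0 | m] := condExp_congr_ae hgf'
    _ = 0 := condExp_zero

lemma condExp_sub_eq_zero_of_condExp_eq [IsFiniteMeasure μ] (hm : m ≤ m0) {f g : Ω → ℝ}
    (hf : Integrable f μ) (hgm : StronglyMeasurable[m] g) (hg : Integrable g μ)
    (h : μ[f | m] =ᵐ[μ] g) : μ[f - g | m] =ᵐ[μ] 0 := by
  refine (condExp_sub hf hg m).trans ?_
  rw [condExp_of_stronglyMeasurable hm hgm hg]
  filter_upwards [h] with ω hω
  simp [hω]

lemma integral_sq_sub_eq_of_condExp_eq [IsFiniteMeasure μ] (hm : m ≤ m0) {F a b : Ω → ℝ}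
    (hF : MemLp F 2 μ) (ha : StronglyMeasurable[m] a) (ha2 : MemLp a 2 μ)
    (hb : StronglyMeasurable[m] b) (hb2 : MemLp b 2 μ) (hFa : μ[F | m] =ᵐ[μ] a) :
    ∫ ω, (F ω - b ω) ^ 2 ∂μ = ∫ ω, (F ω - a ω) ^ 2 ∂μ + ∫ ω, (a ω - b ω) ^ 2 ∂μ := by
  have hFa0 : μ[F - a | m] =ᵐ[μ] 0 := condExp_sub_eq_zero_of_condExp_eq hm
    (hF.integrable one_le_two) ha (ha2.integrable one_le_two) hFa
  have hcross : Integrable ((a - b) * (F - a)) μ := (ha2.sub hb2).integrable_mul (hF.sub ha2)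
  have hcross0 : ∫ ω, ((a - b) * (F - a)) ω ∂μ = 0 := by
    rw [← integral_condExp hm, integral_congr_ae (condExp_mul_eq_zero_of_condExp_eq_zero le_rfl hm
      (ha.sub hb) hcross ((hF.sub ha2).integrable one_le_two) hFa0)]
    simp
  have hsq : Integrable (fun ω => (F ω - a ω) ^ 2) μ := (hF.sub ha2).integrable_sq
  have hsq' : Integrable (fun ω => (a ω - b ω) ^ 2) μ := (ha2.sub hb2).integrable_sq
  calc ∫ ω, (F ω - b ω) ^ 2 ∂μ
      = ∫ ω, (F ω - a ω) ^ 2 + (2 * ((a - b) * (F - a)) ω + (a ω - b ω) ^ 2) ∂μ := by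
        congr with ω
        simp only [Pi.mul_apply, Pi.sub_apply]
        ring
    _ = ∫ ω, (F ω - a ω) ^ 2 ∂μ + ∫ ω, (a ω - b ω) ^ 2 ∂μ := by
        have hcross2 : Integrable (fun ω => 2 * ((a - b) * (F - a)) ω) μ := hcross.const_mul 2
        have hrest : Integrable (fun ω => 2 * ((a - b) * (F - a)) ω + (a ω - b ω) ^ 2) μ :=
          hcross2.add hsq'
        rw [integral_add hsq hrest, integral_add hcross2 hsq', integral_const_mul,
          hcross0, mul_zero, zero_add]

noncomputable def drivPseudoOutcome (Y T Z q p r β θpre : Ω → ℝ) : Ω → ℝ :=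
  θpre + (Y - q - θpre * (T - p)) * (Z - r) / β

lemma memLp_drivPseudoOutcome [IsFiniteMeasure μ] {s : ℝ≥0∞} {Y T Z q p r β θpre : Ω → ℝ}
    (hY : MemLp Y s μ) (hT : MemLp T s μ) (hZ : MemLp Z ∞ μ) (hq : MemLp q s μ)
    (hp : MemLp p s μ) (hr : MemLp r ∞ μ) (hβ : AEStronglyMeasurable β μ) {βmin : ℝ}
    (hβmin : 0 < βmin) (hβlb : ∀ᵐ ω ∂μ, βmin ≤ β ω) (hθpre : MemLp θpre ∞ μ) :
    MemLp (drivPseudoOutcome Y T Z q p r β θpre) s μ := by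
  rw [drivPseudoOutcome, div_eq_mul_inv]
  exact (hθpre.mono_exponent le_top).add <|
    (memLp_top_inv_of_le hβ hβmin hβlb).mul
      ((hZ.sub hr).mul ((hY.sub hq).sub ((hT.sub hp).mul hθpre)) : MemLp _ s μ)

lemma drivPseudoOutcome_eq_add_inv_mul (Y T Z q p r β θpre θ f : Ω → ℝ) :
    drivPseudoOutcome Y T Z q p r β θpre = θpre + β⁻¹ * ((Z - r) * (Y - θ * T - f) +
      ((θ - θpre) * ((T - p) * (Z - r)) + (θ * p + f - q) * (Z - r))) := by
  ext ω
  simp only [drivPseudoOutcome, Pi.add_apply, Pi.mul_apply, Pi.sub_apply, Pi.div_apply,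
    Pi.inv_apply]
  ring

lemma condExp_drivPseudoOutcome [IsFiniteMeasure μ] (hmm' : m ≤ m') (hm' : m' ≤ m0)
    {Y T Z θ f q p r β θpre : Ω → ℝ} (hY : Integrable Y μ) (hT : Integrable T μ)
    (hZm : StronglyMeasurable[m'] Z) (hZ : MemLp Z ∞ μ)
    (hθm : StronglyMeasurable[m] θ) (hθ : MemLp θ ∞ μ)
    (hfm : StronglyMeasurable[m] f) (hf : Integrable f μ)
    (hqm : StronglyMeasurable[m] q) (hq : Integrable q μ)
    (hpm : StronglyMeasurable[m] p) (hp : Integrable p μ)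
    (hrm : StronglyMeasurable[m] r) (hr : MemLp r ∞ μ)
    (hβm : StronglyMeasurable[m] β) {βmin : ℝ} (hβmin : 0 < βmin) (hβlb : ∀ᵐ ω ∂μ, βmin ≤ β ω)
    (hθprem : StronglyMeasurable[m] θpre) (hθpre : MemLp θpre ∞ μ)
    (hIV : μ[Y - θ * T - f | m'] =ᵐ[μ] 0) (hZr : r =ᵐ[μ] μ[Z | m])
    (hβ : β =ᵐ[μ] μ[(T - p) * (Z - r) | m]) :
    μ[drivPseudoOutcome Y T Z q p r β θpre | m] =ᵐ[μ] θ := by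
  have hm : m ≤ m0 := hmm'.trans hm'
  rw [drivPseudoOutcome_eq_add_inv_mul Y T Z q p r β θpre θ f]
  set W := Z - r
  set ε := Y - θ * T - f
  set c := θ * p + f - q
  set G := W * ε + ((θ - θpre) * ((T - p) * W) + c * W)
  have hW : MemLp W ∞ μ := hZ.sub hr
  have hε : Integrable ε μ := (hY.sub (hT.mul_of_top_right hθ)).sub hf
  have hDW : Integrable ((T - p) * W) μ := (hT.sub hp).mul_of_top_left hW
  have hεW : Integrable (W * ε) μ := hε.mul_of_top_right hW
  have hθDW : Integrable ((θ - θpre) * ((T - p) * W)) μ := hDW.mul_of_top_right (hθ.sub hθpre)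
  have hcW : Integrable (c * W) μ :=
    ((hp.mul_of_top_right hθ).add hf |>.sub hq).mul_of_top_left hW
  have hG : Integrable G μ := hεW.add (hθDW.add hcW)
  have hβinv : MemLp β⁻¹ ∞ μ :=
    memLp_top_inv_of_le (hβm.mono hm).aestronglyMeasurable hβmin hβlb
  have hW0 : μ[W | m] =ᵐ[μ] 0 := condExp_sub_eq_zero_of_condExp_eq hm
    (hZ.integrable le_top) hrm (hr.integrable le_top) hZr.symm
  have hεW0 : μ[W * ε | m] =ᵐ[μ] 0 :=
    condExp_mul_eq_zero_of_condExp_eq_zero hmm' hm' (hZm.sub (hrm.mono hmm')) hεW hε hIV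
  have hθDW0 : μ[(θ - θpre) * ((T - p) * W) | m] =ᵐ[μ] (θ - θpre) * β :=
    (condExp_mul_of_stronglyMeasurable_left (hθm.sub hθprem) hθDW hDW).trans
      ((Filter.EventuallyEq.refl _ _).mul hβ.symm)
  have hcW0 : μ[c * W | m] =ᵐ[μ] 0 :=
    condExp_mul_eq_zero_of_condExp_eq_zero le_rfl hm (((hθm.mul hpm).add hfm).sub hqm) hcW
      (hW.integrable le_top) hW0
  have hG0 : μ[G | m] =ᵐ[μ] (θ - θpre) * β := by
    filter_upwards [condExp_add hεW (hθDW.add hcW) m, condExp_add hθDW hcW m, hεW0, hθDW0, hcW0]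
      with ω h₁ h₂ h₃ h₄ h₅
    simp only [Pi.add_apply, Pi.zero_apply] at h₁ h₂ h₃ h₅
    rw [h₁, h₂, h₃, h₄, h₅, zero_add, add_zero]
  filter_upwards [condExp_add (hθpre.integrable le_top) (hG.mul_of_top_right hβinv) m,
    condExp_mul_of_stronglyMeasurable_left hβm.measurable.inv.stronglyMeasurable
      (hG.mul_of_top_right hβinv) hG, hG0, hβlb] with ω h₁ h₂ h₃ h₄
  rw [h₁, condExp_of_stronglyMeasurable hm hθprem (hθpre.integrable le_top)]
  simp only [Pi.add_apply, Pi.mul_apply, Pi.inv_apply, Pi.sub_apply] at h₂ h₃ ⊢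
  rw [h₂, h₃]
  rw [mul_comm _ (β ω), inv_mul_cancel_left₀ (hβmin.trans_le h₄).ne', add_sub_cancel]
end

theorem stmt_11_general
    {Ω 𝓧 : Type*} [MeasurableSpace Ω] [MeasurableSpace 𝓧]
    (μ : Measure Ω) [IsProbabilityMeasure μ]
    (Y T Z : Ω → ℝ) (X : Ω → 𝓧)
    (hY : Measurable Y) (hT : Measurable T) (hZ : Measurable Z) (hX : Measurable X)
    (hYbdd : ∃ C, ∀ ω, |Y ω| ≤ C) (hTbdd : ∃ C, ∀ ω, |T ω| ≤ C)
    (hZbdd : ∃ C, ∀ ω, |Z ω| ≤ C)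
    (θ0 f0 : 𝓧 → ℝ) (hθ0m : Measurable θ0) (hf0m : Measurable f0)
    (hθ0bdd : ∃ C, ∀ x, |θ0 x| ≤ C) (hf0bdd : ∃ C, ∀ x, |f0 x| ≤ C)
    (hIV : μ[fun ω => Y ω - θ0 (X ω) * T ω - f0 (X ω) |
        MeasurableSpace.comap (fun ω => (Z ω, X ω)) inferInstance] =ᵐ[μ] 0)
    (q0 p0 r0 : 𝓧 → ℝ) (hq0m : Measurable q0) (hp0m : Measurable p0) (hr0m : Measurable r0)
    (hq0bdd : ∃ C, ∀ x, |q0 x| ≤ C) (hp0bdd : ∃ C, ∀ x, |p0 x| ≤ C)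
    (hr0bdd : ∃ C, ∀ x, |r0 x| ≤ C)
    (hr0 : (fun ω => r0 (X ω)) =ᵐ[μ] μ[Z | MeasurableSpace.comap X inferInstance])
    (β0 : 𝓧 → ℝ) (hβ0m : Measurable β0)
    (hβ0 : (fun ω => β0 (X ω)) =ᵐ[μ]
        μ[fun ω => (T ω - p0 (X ω)) * (Z ω - r0 (X ω)) | MeasurableSpace.comap X inferInstance])
    (βmin : ℝ) (hβmin : 0 < βmin) (hβlb : ∀ᵐ ω ∂μ, βmin ≤ β0 (X ω))
    (θpre : 𝓧 → ℝ) (hθprem : Measurable θpre) (hθprebdd : ∃ C, ∀ x, |θpre x| ≤ C) :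
    (μ[fun ω => θpre (X ω) + (Y ω - q0 (X ω) - θpre (X ω) * (T ω - p0 (X ω))) * (Z ω - r0 (X ω)) / β0 (X ω) | MeasurableSpace.comap X inferInstance] =ᵐ[μ] (fun ω => θ0 (X ω)))
    ∧ ∀ θ : 𝓧 → ℝ, Measurable θ → (∃ C, ∀ x, |θ x| ≤ C) →
        (∫ ω, ((θpre (X ω) + (Y ω - q0 (X ω) - θpre (X ω) * (T ω - p0 (X ω))) * (Z ω - r0 (X ω)) / β0 (X ω)) - θ (X ω)) ^ 2 ∂μ)
          = (∫ ω, ((θpre (X ω) + (Y ω - q0 (X ω) - θpre (X ω) * (T ω - p0 (X ω))) * (Z ω - r0 (X ω)) / β0 (X ω)) - θ0 (X ω)) ^ 2 ∂μ) + ∫ ω, (θ0 (X ω) - θ (X ω)) ^ 2 ∂μ := by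
  have hmX : MeasurableSpace.comap X inferInstance ≤ ‹MeasurableSpace Ω› := hX.comap_le
  have hmXZX : MeasurableSpace.comap X inferInstance ≤
      MeasurableSpace.comap (fun ω => (Z ω, X ω)) inferInstance :=
    (measurable_snd.comp (comap_measurable fun ω => (Z ω, X ω))).comap_le
  have hmeasX : ∀ {g : 𝓧 → ℝ}, Measurable g →
      StronglyMeasurable[MeasurableSpace.comap X inferInstance] fun ω => g (X ω) :=
    fun hg => (hg.comp (comap_measurable X)).stronglyMeasurable
  have hbddX : ∀ {g : 𝓧 → ℝ}, Measurable g → (∃ C, ∀ x, |g x| ≤ C) →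
      MemLp (fun ω => g (X ω)) ∞ μ := fun hg hC => memLp_top_comp_of_abs_le hg hC hX
  have hYL := memLp_top_of_abs_le (μ := μ) hY.aestronglyMeasurable hYbdd
  have hTL := memLp_top_of_abs_le (μ := μ) hT.aestronglyMeasurable hTbdd
  have hZL := memLp_top_of_abs_le (μ := μ) hZ.aestronglyMeasurable hZbdd
  have hcond := condExp_drivPseudoOutcome hmXZX (hZ.prodMk hX).comap_le
    (hYL.integrable le_top) (hTL.integrable le_top)
    (measurable_fst.comp (comap_measurable _)).stronglyMeasurable hZL
    (hmeasX hθ0m) (hbddX hθ0m hθ0bdd)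
    (hmeasX hf0m) ((hbddX hf0m hf0bdd).integrable le_top)
    (hmeasX hq0m) ((hbddX hq0m hq0bdd).integrable le_top)
    (hmeasX hp0m) ((hbddX hp0m hp0bdd).integrable le_top)
    (hmeasX hr0m) (hbddX hr0m hr0bdd) (hmeasX hβ0m) hβmin hβlb
    (hmeasX hθprem) (hbddX hθprem hθprebdd) hIV hr0 hβ0
  refine ⟨hcond, fun θ hθm hθbdd => integral_sq_sub_eq_of_condExp_eq hmX ?_
    (hmeasX hθ0m) ((hbddX hθ0m hθ0bdd).mono_exponent le_top)
    (hmeasX hθm) ((hbddX hθm hθbdd).mono_exponent le_top) hcond⟩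
  exact memLp_drivPseudoOutcome (hYL.mono_exponent le_top) (hTL.mono_exponent le_top) hZL
    ((hbddX hq0m hq0bdd).mono_exponent le_top) ((hbddX hp0m hp0bdd).mono_exponent le_top)
    (hbddX hr0m hr0bdd) (hβ0m.comp hX).aestronglyMeasurable hβmin hβlb
    (hbddX hθprem hθprebdd)

theorem stmt_11
    {Ω 𝓧 : Type*} [MeasurableSpace Ω] [MeasurableSpace 𝓧] [StandardBorelSpace 𝓧]
    (μ : Measure Ω) [IsProbabilityMeasure μ]
    (Y T Z : Ω → ℝ) (X : Ω → 𝓧)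
    (hY : Measurable Y) (hT : Measurable T) (hZ : Measurable Z) (hX : Measurable X)
    (hYbdd : ∃ C, ∀ ω, |Y ω| ≤ C) (hTbdd : ∃ C, ∀ ω, |T ω| ≤ C)
    (hZbdd : ∃ C, ∀ ω, |Z ω| ≤ C)
    (θ0 f0 : 𝓧 → ℝ) (hθ0m : Measurable θ0) (hf0m : Measurable f0)
    (hθ0bdd : ∃ C, ∀ x, |θ0 x| ≤ C) (hf0bdd : ∃ C, ∀ x, |f0 x| ≤ C)
    (hIV : μ[fun ω => Y ω - θ0 (X ω) * T ω - f0 (X ω) |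
        MeasurableSpace.comap (fun ω => (Z ω, X ω)) inferInstance] =ᵐ[μ] 0)
    (q0 p0 r0 : 𝓧 → ℝ) (hq0m : Measurable q0) (hp0m : Measurable p0) (hr0m : Measurable r0)
    (hq0bdd : ∃ C, ∀ x, |q0 x| ≤ C) (hp0bdd : ∃ C, ∀ x, |p0 x| ≤ C)
    (hr0bdd : ∃ C, ∀ x, |r0 x| ≤ C)
    (hq0 : (fun ω => q0 (X ω)) =ᵐ[μ] μ[Y | MeasurableSpace.comap X inferInstance])
    (hp0 : (fun ω => p0 (X ω)) =ᵐ[μ] μ[T | MeasurableSpace.comap X inferInstance])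
    (hr0 : (fun ω => r0 (X ω)) =ᵐ[μ] μ[Z | MeasurableSpace.comap X inferInstance])
    (h0 : ℝ × 𝓧 → ℝ) (hh0m : Measurable h0) (hh0bdd : ∃ C, ∀ zx, |h0 zx| ≤ C)
    (hh0 : (fun ω => h0 (Z ω, X ω)) =ᵐ[μ]
        μ[T | MeasurableSpace.comap (fun ω => (Z ω, X ω)) inferInstance])
    (β0 : 𝓧 → ℝ) (hβ0m : Measurable β0) (hβ0bdd : ∃ C, ∀ x, |β0 x| ≤ C)
    (hβ0 : (fun ω => β0 (X ω)) =ᵐ[μ]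
        μ[fun ω => (T ω - p0 (X ω)) * (Z ω - r0 (X ω)) | MeasurableSpace.comap X inferInstance])
    (V0 : 𝓧 → ℝ) (hV0m : Measurable V0) (hV0bdd : ∃ C, ∀ x, |V0 x| ≤ C)
    (hV0 : (fun ω => V0 (X ω)) =ᵐ[μ]
        μ[fun ω => (h0 (Z ω, X ω) - p0 (X ω)) ^ 2 | MeasurableSpace.comap X inferInstance])
    (βmin : ℝ) (hβmin : 0 < βmin) (hβlb : ∀ᵐ ω ∂μ, βmin ≤ β0 (X ω))
    (θpre : 𝓧 → ℝ) (hθprem : Measurable θpre) (hθprebdd : ∃ C, ∀ x, |θpre x| ≤ C) :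
    (μ[fun ω => θpre (X ω) + (Y ω - q0 (X ω) - θpre (X ω) * (T ω - p0 (X ω))) * (Z ω - r0 (X ω)) / β0 (X ω) | MeasurableSpace.comap X inferInstance] =ᵐ[μ] (fun ω => θ0 (X ω)))
    ∧ ∀ θ : 𝓧 → ℝ, Measurable θ → (∃ C, ∀ x, |θ x| ≤ C) →
        (∫ ω, ((θpre (X ω) + (Y ω - q0 (X ω) - θpre (X ω) * (T ω - p0 (X ω))) * (Z ω - r0 (X ω)) / β0 (X ω)) - θ (X ω)) ^ 2 ∂μ)
          = (∫ ω, ((θpre (X ω) + (Y ω - q0 (X ω) - θpre (X ω) * (T ω - p0 (X ω))) * (Z ω - r0 (X ω)) / β0 (X ω)) - θ0 (X ω)) ^ 2 ∂μ) + ∫ ω, (θ0 (X ω) - θ (X ω)) ^ 2 ∂μ :=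
  stmt_11_general μ Y T Z X hY hT hZ hX hYbdd hTbdd hZbdd θ0 f0 hθ0m hf0m hθ0bdd hf0bdd hIV q0 p0 r0
    hq0m hp0m hr0m hq0bdd hp0bdd hr0bdd hr0 β0 hβ0m hβ0 βmin hβmin hβlb θpre hθprem hθprebdd
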